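/- Pythagorean identity for KL projection onto lazy maps: let π be a probability density on ℝ^d, ρ the standard Gaussian, U orthogonal, r ≤ d, and define f⋆(y) = E[π(X)/ρ(X) | U_rᵀ X = y] with X ∼ ρ, and let T⋆ ∈ 𝒯_r(U) satisfy T⋆_♯ρ(x) = f⋆(U_rᵀ x) ρ(x). Then for every lazy map T ∈ 𝒯_r(U), D_KL(π ‖ T_♯ρ) = D_KL(π ‖ T⋆_♯ρ) + D_KL(T⋆_♯ρ ‖ T_♯ρ). In particular T⋆ minimizes D_KL(π ‖ T_♯ρ) over T ∈ 𝒯_r(U). -/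

import Mathlib

open MeasureTheory Matrix Filter
open scoped ENNReal

/-- Standard Gaussian density on `ℝ^d`. -/
noncomputable def gaussD (d : ℕ) (x : Fin d → ℝ) : ℝ :=
  (2 * Real.pi) ^ (-(d : ℝ) / 2) * Real.exp (-(∑ i, (x i) ^ 2) / 2)

/-- Standard Gaussian measure on `ℝ^d`. -/
noncomputable def stdGauss (d : ℕ) : Measure (Fin d → ℝ) :=
  volume.withDensity (fun x => ENNReal.ofReal (gaussD d x))

open Classical in
/-- Kullback--Leibler divergence, valued in `ℝ≥0∞`. -/
noncomputable def klDiv {E : Type*} [MeasurableSpace E] (μ ν : Measure E) : ℝ≥0∞ :=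
  if μ ≪ ν ∧ Integrable (fun x => Real.log ((μ.rnDeriv ν x).toReal)) μ
  then ENNReal.ofReal (∫ x, Real.log ((μ.rnDeriv ν x).toReal) ∂μ)
  else ⊤

/-- First `r` columns of a `d×d` matrix. -/
def colsFirst {d : ℕ} (r : ℕ) (hr : r ≤ d) (U : Matrix (Fin d) (Fin d) ℝ) :
    Matrix (Fin d) (Fin r) ℝ :=
  fun i j => U i (Fin.castLE hr j)

/-- Last `d - r` columns of a `d×d` matrix. -/
def colsLast {d : ℕ} (r : ℕ) (hr : r ≤ d) (U : Matrix (Fin d) (Fin d) ℝ) :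
    Matrix (Fin d) (Fin (d - r)) ℝ :=
  fun i j => U i ⟨r + (j : ℕ), by have := j.isLt; omega⟩

/-- A pair of maps forming a (C¹) diffeomorphism of `ℝ^n`. -/
def IsDiffeo {n : ℕ} (τ σ : (Fin n → ℝ) → (Fin n → ℝ)) : Prop :=
  ContDiff ℝ 1 τ ∧ ContDiff ℝ 1 σ ∧ Function.LeftInverse σ τ ∧ Function.RightInverse σ τ

/-- The lazy map `T(z) = U_r τ(z_{1:r}) + U_⊥ z_⊥`. -/
noncomputable def lazyMap {d r : ℕ} (hr : r ≤ d) (U : Matrix (Fin d) (Fin d) ℝ)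
    (τ : (Fin r → ℝ) → (Fin r → ℝ)) (z : Fin d → ℝ) : Fin d → ℝ :=
  (colsFirst r hr U).mulVec (τ (fun j => z (Fin.castLE hr j))) +
  (colsLast r hr U).mulVec (fun j => z ⟨r + (j : ℕ), by have := j.isLt; omega⟩)

/-- Membership in the class `𝒯_r(U)` of lazy maps. -/
def IsLazy {d : ℕ} (r : ℕ) (hr : r ≤ d) (U : Matrix (Fin d) (Fin d) ℝ)
    (T : (Fin d → ℝ) → (Fin d → ℝ)) : Prop :=
  ∃ τ σ, IsDiffeo τ σ ∧ T = lazyMap hr U τ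


/-!
Every lazy map `T` pushes `ρ` forward to `g(U_rᵀ x) ρ(x)` with `g > 0` measurable: the change of
variables `x = T z` only distorts the first `r` rotated coordinates, so the Jacobian and the
Gaussian correction depend on `U_rᵀ x` alone. With `F = E_ρ[dπ/dρ | U_rᵀ X]` and `ν⋆ = F ρ`,
the log-likelihood ratios satisfy `log dπ/dν - log dπ/dν⋆ = log F - log g = log dν⋆/dν`, a
function of `U_rᵀ x`. Such functions have the same integral under `π` and under `ν⋆` by the tower
property, which gives the identity; Gibbs' inequality makes both summands nonnegative.
-/

lemma det_ne_zero_of_hasFDerivAt_of_leftInverse {𝕜 E : Type*} [NontriviallyNormedField 𝕜]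
    [NormedAddCommGroup E] [NormedSpace 𝕜 E] {f g : E → E} {f' : E →L[𝕜] E} {x : E}
    (hf : HasFDerivAt f f' x) (hg : DifferentiableAt 𝕜 g (f x))
    (hgf : Function.LeftInverse g f) : f'.det ≠ 0 := by
  have hcomp : fderiv 𝕜 g (f x) ∘L f' = ContinuousLinearMap.id 𝕜 E := by
    have h := hg.hasFDerivAt.comp x hf
    rw [hgf.comp_eq_id] at h
    exact h.unique (hasFDerivAt_id x)
  intro h0
  have := congrArg ContinuousLinearMap.det hcomp
  simp [ContinuousLinearMap.det, LinearMap.det_comp, h0] at this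

lemma map_withDensity_comp {α β : Type*} [MeasurableSpace α] [MeasurableSpace β]
    (μ : Measure α) {f : α → β} (hf : Measurable f) {q : β → ℝ≥0∞} (hq : Measurable q) :
    Measure.map f (μ.withDensity (q ∘ f)) = (Measure.map f μ).withDensity q := by
  ext s hs
  rw [Measure.map_apply hf hs, withDensity_apply _ (hf hs), withDensity_apply _ hs,
    setLIntegral_map hs hq hf]
  rfl

section KullbackLeibler

variable {α : Type*} {mα : MeasurableSpace α} {μ ν ρ : Measure α}

lemma klDiv_ne_top_iff : klDiv μ ν ≠ ⊤ ↔ μ ≪ ν ∧ Integrable (llr μ ν) μ := by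
  unfold klDiv llr
  split_ifs with h <;> simp [h]

lemma klDiv_of_ac_of_integrable (hμν : μ ≪ ν) (hint : Integrable (llr μ ν) μ) :
    klDiv μ ν = ENNReal.ofReal (∫ x, llr μ ν x ∂μ) :=
  if_pos ⟨hμν, hint⟩

lemma integral_llr_nonneg [IsProbabilityMeasure μ] [IsProbabilityMeasure ν] (hμν : μ ≪ ν)
    (hint : Integrable (llr μ ν) μ) : 0 ≤ ∫ x, llr μ ν x ∂μ := by
  simpa using InformationTheory.integral_llr_add_sub_measure_univ_nonneg hμν hint

lemma llr_withDensity_ofReal [SigmaFinite μ] [SigmaFinite ρ] {g : α → ℝ} (hg : Measurable g)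
    (hμ : μ ≪ ρ.withDensity fun x => ENNReal.ofReal (g x)) :
    llr μ (ρ.withDensity fun x => ENNReal.ofReal (g x)) =ᵐ[μ]
      fun x => llr μ ρ x - Real.log (g x) := by
  set ν := ρ.withDensity fun x => ENNReal.ofReal (g x)
  have hμρ : μ ≪ ρ := hμ.trans (withDensity_absolutelyContinuous _ _)
  have hchain := hμρ.ae_le (Measure.rnDeriv_mul_rnDeriv (κ := ρ) hμ)
  have hνρ := hμρ.ae_le (Measure.rnDeriv_withDensity ρ hg.ennreal_ofReal)
  filter_upwards [hchain, hνρ, Measure.rnDeriv_pos hμρ, hμρ.ae_le (Measure.rnDeriv_lt_top μ ρ)]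
    with x hchain hνρ hpos hfin
  have hprod :
      (μ.rnDeriv ν x).toReal * (ENNReal.ofReal (g x)).toReal = (μ.rnDeriv ρ x).toReal := by
    rw [← ENNReal.toReal_mul, ← hνρ, ← hchain]
    rfl
  obtain ⟨hμν_ne, hg_ne⟩ := mul_ne_zero_iff.mp (hprod ▸ (ENNReal.toReal_pos hpos.ne' hfin.ne).ne')
  have hg_pos : 0 < g x := by
    by_contra! h
    simp [ENNReal.ofReal_eq_zero.mpr h] at hg_ne
  rw [ENNReal.toReal_ofReal hg_pos.le] at hprod
  simp only [llr, ← hprod, Real.log_mul hμν_ne hg_pos.ne', add_sub_cancel_right]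

end KullbackLeibler

section CondProj

/-- In the paper's setting (`m` generated by `x ↦ U_rᵀ x`), this is `T⋆_♯ρ`. -/
noncomputable def condProj {α : Type*} (m : MeasurableSpace α) {mα : MeasurableSpace α}
    (ρ π : Measure[mα] α) : Measure[mα] α :=
  ρ.withDensity fun x => ENNReal.ofReal (ρ[fun y => (π.rnDeriv ρ y).toReal | m] x)

variable {α : Type*} {m mα : MeasurableSpace α} {ρ π : Measure α}

lemma measurable_condExp_rnDeriv (hm : m ≤ mα) :
    Measurable (ρ[fun y => (π.rnDeriv ρ y).toReal | m]) :=
  (stronglyMeasurable_condExp.mono hm).measurable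

lemma condExp_rnDeriv_nonneg : 0 ≤ᵐ[ρ] ρ[fun y => (π.rnDeriv ρ y).toReal | m] :=
  condExp_nonneg (ae_of_all _ fun _ => ENNReal.toReal_nonneg)

lemma condProj_absolutelyContinuous : condProj m ρ π ≪ ρ :=
  withDensity_absolutelyContinuous _ _

lemma llr_condProj_self (hm : m ≤ mα) [SigmaFinite ρ] :
    llr (condProj m ρ π) ρ =ᵐ[condProj m ρ π]
      fun x => Real.log (ρ[fun y => (π.rnDeriv ρ y).toReal | m] x) := by
  have hdens := Measure.rnDeriv_withDensity ρ
    (measurable_condExp_rnDeriv (ρ := ρ) (π := π) hm).ennreal_ofReal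
  filter_upwards [condProj_absolutelyContinuous.ae_le
    (hdens.and (condExp_rnDeriv_nonneg (m := m) (π := π)))] with x ⟨hx, hx_nonneg⟩
  rw [llr, condProj, hx, ENNReal.toReal_ofReal hx_nonneg]

lemma integrable_condProj_and_integral_eq [IsFiniteMeasure ρ] [IsFiniteMeasure π] (hm : m ≤ mα)
    (hπρ : π ≪ ρ) {Φ : α → ℝ} (hΦ : StronglyMeasurable[m] Φ) (hint : Integrable Φ π) :
    Integrable Φ (condProj m ρ π) ∧ ∫ x, Φ x ∂(condProj m ρ π) = ∫ x, Φ x ∂π := by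
  set F := ρ[fun y => (π.rnDeriv ρ y).toReal | m]
  have hint_ρ : Integrable (fun x => Φ x * (π.rnDeriv ρ x).toReal) ρ := by
    simpa only [mul_comm (Φ _)] using (integrable_toReal_rnDeriv_mul_iff hπρ).mpr hint
  have hpull : ρ[fun x => Φ x * (π.rnDeriv ρ x).toReal | m] =ᵐ[ρ] fun x => Φ x * F x :=
    condExp_mul_of_stronglyMeasurable_left hΦ hint_ρ Measure.integrable_toReal_rnDeriv
  have hFΦ : (fun x => F x * Φ x) =ᵐ[ρ] ρ[fun x => Φ x * (π.rnDeriv ρ x).toReal | m] :=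
    (hpull.trans (ae_of_all _ fun x => mul_comm _ _)).symm
  have hF_ofReal : (fun x => (ENNReal.ofReal (F x)).toReal • Φ x) =ᵐ[ρ] fun x => F x * Φ x := by
    filter_upwards [condExp_rnDeriv_nonneg] with x hx
    rw [ENNReal.toReal_ofReal hx, smul_eq_mul]
  have hF_meas := (measurable_condExp_rnDeriv (ρ := ρ) (π := π) hm).ennreal_ofReal
  refine ⟨?_, ?_⟩
  · rw [condProj, integrable_withDensity_iff_integrable_smul' hF_meas
      (ae_of_all _ fun _ => ENNReal.ofReal_lt_top), integrable_congr (hF_ofReal.trans hFΦ)]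
    exact integrable_condExp
  · calc ∫ x, Φ x ∂(condProj m ρ π) = ∫ x, F x * Φ x ∂ρ := by
          rw [condProj, integral_withDensity_eq_integral_toReal_smul hF_meas
            (ae_of_all _ fun _ => ENNReal.ofReal_lt_top), integral_congr_ae hF_ofReal]
      _ = ∫ x, Φ x * (π.rnDeriv ρ x).toReal ∂ρ := by
          rw [integral_congr_ae hFΦ, integral_condExp hm]
      _ = ∫ x, Φ x ∂π := by
          simp_rw [mul_comm (Φ _)]
          exact integral_toReal_rnDeriv_mul hπρ

lemma isProbabilityMeasure_condProj [IsFiniteMeasure ρ] [IsProbabilityMeasure π] (hm : m ≤ mα)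
    (hπρ : π ≪ ρ) : IsProbabilityMeasure (condProj m ρ π) := by
  obtain ⟨hint, heq⟩ := integrable_condProj_and_integral_eq hm hπρ
    (stronglyMeasurable_const (b := (1 : ℝ))) (integrable_const 1)
  have : IsFiniteMeasure (condProj m ρ π) :=
    (integrable_const_iff.mp hint).resolve_left one_ne_zero
  constructor
  simpa [integral_const, measureReal_def, ENNReal.toReal_eq_one_iff] using heq

theorem klDiv_eq_klDiv_condProj_add (hm : m ≤ mα) [IsProbabilityMeasure ρ]
    [IsProbabilityMeasure π] (hπρ : π ≪ ρ) {ν : Measure α} [IsProbabilityMeasure ν] {g : α → ℝ}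
    (hg : StronglyMeasurable[m] g) (hg_pos : ∀ᵐ x ∂ρ, 0 < g x)
    (hν : ν = ρ.withDensity fun x => ENNReal.ofReal (g x))
    (hπν : klDiv π ν ≠ ⊤) (hπνs : klDiv π (condProj m ρ π) ≠ ⊤) :
    klDiv π ν = klDiv π (condProj m ρ π) + klDiv (condProj m ρ π) ν := by
  subst hν
  set ν := ρ.withDensity fun x => ENNReal.ofReal (g x)
  set νs := condProj m ρ π
  have : IsProbabilityMeasure νs := isProbabilityMeasure_condProj hm hπρ
  obtain ⟨hπν_ac, hint1⟩ := klDiv_ne_top_iff.mp hπν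
  obtain ⟨hπνs_ac, hint2⟩ := klDiv_ne_top_iff.mp hπνs
  have hgm : Measurable g := hg.measurable.mono hm le_rfl
  have hνsν : νs ≪ ν := condProj_absolutelyContinuous.trans <|
    withDensity_absolutelyContinuous' hgm.ennreal_ofReal.aemeasurable
      (by filter_upwards [hg_pos] with x hx using by simpa using hx)
  set Φ := fun x => Real.log (ρ[fun y => (π.rnDeriv ρ y).toReal | m] x) - Real.log (g x)
  have hΦ : StronglyMeasurable[m] Φ :=
    ((Real.measurable_log.comp stronglyMeasurable_condExp.measurable).sub
      (Real.measurable_log.comp hg.measurable)).stronglyMeasurable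
  have hllr_π : (fun x => llr π ν x - llr π νs x) =ᵐ[π] Φ := by
    filter_upwards [llr_withDensity_ofReal hgm hπν_ac,
      llr_withDensity_ofReal (measurable_condExp_rnDeriv hm) hπνs_ac] with x h1 h2
    rw [h1, show llr π νs x = _ from h2]
    ring
  have hllr_νs : llr νs ν =ᵐ[νs] Φ := by
    filter_upwards [llr_withDensity_ofReal hgm hνsν, llr_condProj_self hm] with x h1 h2
    rw [h1, h2]
  obtain ⟨hΦ_int, hΦ_eq⟩ :=
    integrable_condProj_and_integral_eq hm hπρ hΦ ((hint1.sub hint2).congr hllr_π)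
  have hint3 : Integrable (llr νs ν) νs := hΦ_int.congr hllr_νs.symm
  have hsum : ∫ x, llr π ν x ∂π = ∫ x, llr π νs x ∂π + ∫ x, llr νs ν x ∂νs := by
    rw [integral_congr_ae hllr_νs, hΦ_eq, ← integral_congr_ae hllr_π, integral_sub hint1 hint2]
    ring
  rw [klDiv_of_ac_of_integrable hπν_ac hint1, klDiv_of_ac_of_integrable hπνs_ac hint2,
    klDiv_of_ac_of_integrable hνsν hint3, hsum, ENNReal.ofReal_add
    (integral_llr_nonneg hπνs_ac hint2) (integral_llr_nonneg hνsν hint3)]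

end CondProj

section Orthogonal

variable {d : ℕ} {U : Matrix (Fin d) (Fin d) ℝ}

lemma transpose_mulVec_mulVec_cancel (hU : U * Uᵀ = 1) (x : Fin d → ℝ) : Uᵀ *ᵥ U *ᵥ x = x := by
  rw [Matrix.mulVec_mulVec, mul_eq_one_comm.mp hU, Matrix.one_mulVec]

lemma mulVec_transpose_mulVec_cancel (hU : U * Uᵀ = 1) (x : Fin d → ℝ) : U *ᵥ Uᵀ *ᵥ x = x := by
  rw [Matrix.mulVec_mulVec, hU, Matrix.one_mulVec]

lemma sum_sq_mulVec (hU : U * Uᵀ = 1) (w : Fin d → ℝ) :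
    ∑ i, (U *ᵥ w) i ^ 2 = ∑ i, w i ^ 2 := by
  have h : U *ᵥ w ⬝ᵥ U *ᵥ w = w ⬝ᵥ w := by
    rw [Matrix.dotProduct_mulVec, ← Matrix.mulVec_transpose, transpose_mulVec_mulVec_cancel hU]
  simpa [dotProduct, pow_two] using h

end Orthogonal

section Coordinates

variable {d r : ℕ}

def finSumFinEquivOfLE (hr : r ≤ d) : Fin r ⊕ Fin (d - r) ≃ Fin d :=
  finSumFinEquiv.trans (finCongr (Nat.add_sub_cancel' hr))

lemma sum_univ_split_of_le {M : Type*} [AddCommMonoid M] (hr : r ≤ d) (f : Fin d → M) :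
    ∑ k, f k = ∑ j : Fin r, f (Fin.castLE hr j) +
      ∑ j : Fin (d - r), f ⟨r + j, by have := j.isLt; omega⟩ := by
  rw [← (finSumFinEquivOfLE hr).sum_comp, Fintype.sum_sum_type]
  rfl

noncomputable def splitCoords (hr : r ≤ d) :
    (Fin d → ℝ) ≃L[ℝ] (Fin r → ℝ) × (Fin (d - r) → ℝ) :=
  (ContinuousLinearEquiv.piCongrLeft ℝ (fun _ => ℝ) (finSumFinEquivOfLE hr)).symm.trans
    (ContinuousLinearEquiv.sumPiEquivProdPi ℝ _ _ _)

lemma sum_sq_splitCoords (hr : r ≤ d) (x : Fin d → ℝ) :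
    ∑ k, x k ^ 2 = ∑ j, (splitCoords hr x).1 j ^ 2 + ∑ j, (splitCoords hr x).2 j ^ 2 :=
  sum_univ_split_of_le hr _

lemma colsFirst_transpose_mulVec (hr : r ≤ d) (U : Matrix (Fin d) (Fin d) ℝ) (x : Fin d → ℝ) :
    (colsFirst r hr U)ᵀ *ᵥ x = (splitCoords hr (Uᵀ *ᵥ x)).1 := rfl

noncomputable def blockMap (hr : r ≤ d) (τ : (Fin r → ℝ) → (Fin r → ℝ)) :
    (Fin d → ℝ) → (Fin d → ℝ) :=
  (splitCoords hr).symm ∘ Prod.map τ id ∘ splitCoords hr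

lemma splitCoords_blockMap (hr : r ≤ d) (τ : (Fin r → ℝ) → (Fin r → ℝ)) (z : Fin d → ℝ) :
    splitCoords hr (blockMap hr τ z) = Prod.map τ id (splitCoords hr z) :=
  (splitCoords hr).apply_symm_apply _

lemma blockMap_leftInverse (hr : r ≤ d) {τ σ : (Fin r → ℝ) → (Fin r → ℝ)}
    (h : Function.LeftInverse σ τ) : Function.LeftInverse (blockMap hr σ) (blockMap hr τ) := by
  intro z
  simp only [blockMap, Function.comp_apply, ContinuousLinearEquiv.apply_symm_apply,
    Prod.map_map, h.comp_eq_id, Function.id_comp, Prod.map_id, id_eq,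
    ContinuousLinearEquiv.symm_apply_apply]

lemma contDiff_blockMap (hr : r ≤ d) {n : WithTop ℕ∞} {τ : (Fin r → ℝ) → (Fin r → ℝ)}
    (hτ : ContDiff ℝ n τ) : ContDiff ℝ n (blockMap hr τ) :=
  (splitCoords hr).symm.contDiff.comp ((hτ.prodMap contDiff_id).comp (splitCoords hr).contDiff)

noncomputable def blockCLM (hr : r ≤ d) (A : (Fin r → ℝ) →L[ℝ] (Fin r → ℝ)) :
    (Fin d → ℝ) →L[ℝ] (Fin d → ℝ) :=
  ((splitCoords hr).symm : (Fin r → ℝ) × (Fin (d - r) → ℝ) →L[ℝ] (Fin d → ℝ)) ∘L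
    A.prodMap (ContinuousLinearMap.id ℝ _) ∘L
      (splitCoords hr : (Fin d → ℝ) →L[ℝ] (Fin r → ℝ) × (Fin (d - r) → ℝ))

lemma hasFDerivAt_blockMap (hr : r ≤ d) {τ : (Fin r → ℝ) → (Fin r → ℝ)} {z : Fin d → ℝ}
    (hτ : DifferentiableAt ℝ τ (splitCoords hr z).1) :
    HasFDerivAt (blockMap hr τ) (blockCLM hr (fderiv ℝ τ (splitCoords hr z).1)) z :=
  (splitCoords hr).symm.hasFDerivAt.comp z
    ((hτ.hasFDerivAt.prodMap _ (hasFDerivAt_id _)).comp z (splitCoords hr).hasFDerivAt)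

lemma continuous_blockCLM (hr : r ≤ d) : Continuous (blockCLM (d := d) hr) :=
  continuous_const.clm_comp ((continuous_id.prod_mapL ℝ continuous_const).clm_comp
    continuous_const)

end Coordinates

section LazyMap

variable {d r : ℕ} {U : Matrix (Fin d) (Fin d) ℝ}

lemma lazyMap_eq_mulVec_blockMap (hr : r ≤ d) (U : Matrix (Fin d) (Fin d) ℝ)
    (τ : (Fin r → ℝ) → (Fin r → ℝ)) : lazyMap hr U τ = (U *ᵥ ·) ∘ blockMap hr τ := by
  ext z i
  have h := splitCoords_blockMap hr τ z
  have h₁ (j : Fin r) : blockMap hr τ z (Fin.castLE hr j) = τ (splitCoords hr z).1 j :=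
    congrFun (congrArg Prod.fst h) j
  have h₂ (j : Fin (d - r)) : blockMap hr τ z ⟨r + j, by have := j.isLt; omega⟩ =
      z ⟨r + j, by have := j.isLt; omega⟩ :=
    congrFun (congrArg Prod.snd h) j
  simp only [Function.comp_apply, Matrix.mulVec, dotProduct, sum_univ_split_of_le hr, h₁, h₂]
  rfl

lemma continuous_lazyMap (hr : r ≤ d) {τ : (Fin r → ℝ) → (Fin r → ℝ)} (hτ : Continuous τ) :
    Continuous (lazyMap hr U τ) := by
  rw [lazyMap_eq_mulVec_blockMap]
  exact (Matrix.mulVecLin U).toContinuousLinearMap.continuous.comp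
    ((contDiff_blockMap hr (n := 0) (contDiff_zero.mpr hτ)).continuous)

noncomputable def lazyDeriv (hr : r ≤ d) (U : Matrix (Fin d) (Fin d) ℝ)
    (A : (Fin r → ℝ) →L[ℝ] (Fin r → ℝ)) : (Fin d → ℝ) →L[ℝ] (Fin d → ℝ) :=
  (Matrix.mulVecLin U).toContinuousLinearMap ∘L blockCLM hr A

lemma hasFDerivAt_lazyMap (hr : r ≤ d) {τ : (Fin r → ℝ) → (Fin r → ℝ)} {z : Fin d → ℝ}
    (hτ : DifferentiableAt ℝ τ (splitCoords hr z).1) :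
    HasFDerivAt (lazyMap hr U τ) (lazyDeriv hr U (fderiv ℝ τ (splitCoords hr z).1)) z := by
  rw [lazyMap_eq_mulVec_blockMap]
  exact (Matrix.mulVecLin U).toContinuousLinearMap.hasFDerivAt.comp z
    (hasFDerivAt_blockMap hr hτ)

noncomputable def lazyJacobian (hr : r ≤ d) (U : Matrix (Fin d) (Fin d) ℝ)
    (τ : (Fin r → ℝ) → (Fin r → ℝ)) (a : Fin r → ℝ) : ℝ :=
  |(lazyDeriv hr U (fderiv ℝ τ a)).det|

lemma measurable_lazyJacobian (hr : r ≤ d) (τ : (Fin r → ℝ) → (Fin r → ℝ)) :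
    Measurable (lazyJacobian hr U τ) :=
  (continuous_abs.comp (ContinuousLinearMap.continuous_det.comp
    (continuous_const.clm_comp (continuous_blockCLM hr)))).measurable.comp
    (measurable_fderiv ℝ τ)

variable (hr : r ≤ d) (hU : U * Uᵀ = 1) {τ σ : (Fin r → ℝ) → (Fin r → ℝ)}
include hr hU

lemma lazyMap_leftInverse (h : Function.LeftInverse σ τ) :
    Function.LeftInverse (blockMap hr σ ∘ (Uᵀ *ᵥ ·)) (lazyMap hr U τ) := by
  rw [lazyMap_eq_mulVec_blockMap]
  exact Function.LeftInverse.comp (transpose_mulVec_mulVec_cancel hU) (blockMap_leftInverse hr h)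

lemma lazyMap_rightInverse (h : Function.RightInverse σ τ) :
    Function.RightInverse (blockMap hr σ ∘ (Uᵀ *ᵥ ·)) (lazyMap hr U τ) := by
  rw [lazyMap_eq_mulVec_blockMap]
  exact (blockMap_leftInverse hr h).comp (mulVec_transpose_mulVec_cancel hU)

lemma colsFirst_transpose_mulVec_lazyMap (z : Fin d → ℝ) :
    (colsFirst r hr U)ᵀ *ᵥ lazyMap hr U τ z = τ (splitCoords hr z).1 := by
  rw [colsFirst_transpose_mulVec, lazyMap_eq_mulVec_blockMap, Function.comp_apply,
    transpose_mulVec_mulVec_cancel hU, splitCoords_blockMap]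
  rfl

lemma sum_sq_lazyMap (z : Fin d → ℝ) :
    ∑ i, lazyMap hr U τ z i ^ 2 =
      ∑ j, τ (splitCoords hr z).1 j ^ 2 + ∑ j, (splitCoords hr z).2 j ^ 2 := by
  rw [lazyMap_eq_mulVec_blockMap, Function.comp_apply, sum_sq_mulVec hU,
    sum_sq_splitCoords hr, splitCoords_blockMap]
  rfl

lemma lazyJacobian_pos (hτ : IsDiffeo τ σ) (a : Fin r → ℝ) : 0 < lazyJacobian hr U τ a := by
  set z := (splitCoords hr).symm (a, 0)
  have ha : (splitCoords hr z).1 = a := by simp [z]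
  have hdiff : DifferentiableAt ℝ τ (splitCoords hr z).1 := hτ.1.differentiable one_ne_zero _
  have hinv : Differentiable ℝ (blockMap hr σ ∘ (Uᵀ *ᵥ ·)) :=
    ((contDiff_blockMap hr hτ.2.1).differentiable one_ne_zero).comp
      (Matrix.mulVecLin Uᵀ).toContinuousLinearMap.differentiable
  rw [lazyJacobian, abs_pos, ← ha]
  exact det_ne_zero_of_hasFDerivAt_of_leftInverse (hasFDerivAt_lazyMap hr hdiff) (hinv _)
    (lazyMap_leftInverse hr hU hτ.2.2.1)

end LazyMap

section Gaussian

open ProbabilityTheory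

lemma gaussD_pos {d : ℕ} (x : Fin d → ℝ) : 0 < gaussD d x := by
  unfold gaussD
  positivity

lemma continuous_gaussD (d : ℕ) : Continuous (gaussD d) := by
  unfold gaussD
  fun_prop

lemma gaussD_eq_prod (d : ℕ) : gaussD d = fun x => ∏ i, gaussianPDFReal 0 1 (x i) := by
  ext x
  have hconst : (2 * Real.pi) ^ (-(d : ℝ) / 2) = (√(2 * Real.pi))⁻¹ ^ d := by
    rw [Real.sqrt_eq_rpow, ← Real.rpow_neg (by positivity), ← Real.rpow_mul_natCast
      (by positivity)]
    ring_nf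
  rw [gaussD, hconst]
  simp only [gaussianPDFReal, Finset.prod_mul_distrib, ← Real.exp_sum, Finset.prod_const,
    Finset.card_univ, Fintype.card_fin, NNReal.coe_one, mul_one, sub_zero, Finset.sum_div,
    Finset.sum_neg_distrib, neg_div]

lemma integral_gaussD (d : ℕ) : ∫ x, gaussD d x = 1 := by
  rw [gaussD_eq_prod, integral_fintype_prod_volume_eq_prod (fun _ => gaussianPDFReal 0 1)]
  simp [integral_gaussianPDFReal_eq_one]

instance isProbabilityMeasure_stdGauss (d : ℕ) : IsProbabilityMeasure (stdGauss d) := by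
  constructor
  have hint : Integrable (gaussD d) := by
    rw [gaussD_eq_prod]
    exact Integrable.fintype_prod (fun _ => integrable_gaussianPDFReal 0 1)
  rw [stdGauss, withDensity_apply _ MeasurableSet.univ, Measure.restrict_univ,
    ← ofReal_integral_eq_lintegral_ofReal hint (ae_of_all _ fun x => (gaussD_pos x).le),
    integral_gaussD, ENNReal.ofReal_one]

lemma volume_absolutelyContinuous_stdGauss (d : ℕ) : volume ≪ stdGauss d :=
  withDensity_absolutelyContinuous' (continuous_gaussD d).measurable.ennreal_ofReal.aemeasurable
    (ae_of_all _ fun x => by simpa using gaussD_pos x)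

lemma withDensity_mul_gaussD {d : ℕ} {f : (Fin d → ℝ) → ℝ} (hf : Measurable f) :
    volume.withDensity (fun x => ENNReal.ofReal (f x * gaussD d x)) =
      (stdGauss d).withDensity fun x => ENNReal.ofReal (f x) := by
  rw [stdGauss, ← withDensity_mul _ (continuous_gaussD d).measurable.ennreal_ofReal
    hf.ennreal_ofReal]
  congr with x
  rw [Pi.mul_apply, mul_comm, ENNReal.ofReal_mul (gaussD_pos x).le]

end Gaussian

section Pushforward

variable {d r : ℕ} {U : Matrix (Fin d) (Fin d) ℝ}

/-- The `g` of Proposition 1: `φ(σ y) / (φ(y) |det DT|)` with `φ` the Gaussian density on `ℝ^r`,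
the Jacobian being taken at the preimage point. -/
noncomputable def lazyDensity (hr : r ≤ d) (U : Matrix (Fin d) (Fin d) ℝ)
    (τ σ : (Fin r → ℝ) → (Fin r → ℝ)) (y : Fin r → ℝ) : ℝ :=
  Real.exp ((∑ j, y j ^ 2 - ∑ j, σ y j ^ 2) / 2) / lazyJacobian hr U τ (σ y)

lemma measurable_lazyDensity (hr : r ≤ d) {τ σ : (Fin r → ℝ) → (Fin r → ℝ)}
    (hσ : Measurable σ) : Measurable (lazyDensity hr U τ σ) := by
  refine Measurable.div ?_ ((measurable_lazyJacobian hr τ).comp hσ)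
  fun_prop

variable (hr : r ≤ d) (hU : U * Uᵀ = 1) {τ σ : (Fin r → ℝ) → (Fin r → ℝ)} (hτ : IsDiffeo τ σ)
include hr hU hτ

lemma lazyDensity_pos (y : Fin r → ℝ) : 0 < lazyDensity hr U τ σ y :=
  div_pos (Real.exp_pos _) (lazyJacobian_pos hr hU hτ _)

lemma gaussD_eq_lazyJacobian_mul (z : Fin d → ℝ) :
    gaussD d z = lazyJacobian hr U τ (splitCoords hr z).1 *
      (lazyDensity hr U τ σ ((colsFirst r hr U)ᵀ *ᵥ lazyMap hr U τ z) *
        gaussD d (lazyMap hr U τ z)) := by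
  have hJ := (lazyJacobian_pos hr hU hτ (splitCoords hr z).1).ne'
  rw [colsFirst_transpose_mulVec_lazyMap hr hU, lazyDensity, hτ.2.2.1, gaussD, gaussD,
    sum_sq_lazyMap hr hU, sum_sq_splitCoords hr z]
  field_simp
  rw [← Real.exp_add]
  ring_nf

theorem map_lazyMap_stdGauss :
    Measure.map (lazyMap hr U τ) (stdGauss d) = (stdGauss d).withDensity
      fun x => ENNReal.ofReal (lazyDensity hr U τ σ ((colsFirst r hr U)ᵀ *ᵥ x)) := by
  set T := lazyMap hr U τ
  have hg : Measurable fun x => lazyDensity hr U τ σ ((colsFirst r hr U)ᵀ *ᵥ x) :=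
    (measurable_lazyDensity hr hτ.2.1.continuous.measurable).comp
      (continuous_const.matrix_mulVec (continuous_id (X := Fin d → ℝ))).measurable
  set q : (Fin d → ℝ) → ℝ≥0∞ := fun x =>
    ENNReal.ofReal (lazyDensity hr U τ σ ((colsFirst r hr U)ᵀ *ᵥ x) * gaussD d x)
  set J : (Fin d → ℝ) → ℝ≥0∞ := fun z =>
    ENNReal.ofReal (lazyJacobian hr U τ (splitCoords hr z).1)
  have hT : Measurable T := (continuous_lazyMap hr hτ.1.continuous).measurable
  have hq : Measurable q := (hg.mul (continuous_gaussD d).measurable).ennreal_ofReal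
  have hJ : Measurable J := ((measurable_lazyJacobian hr τ).comp
    (continuous_fst.comp (splitCoords hr).continuous).measurable).ennreal_ofReal
  have hρ : stdGauss d = (volume.withDensity J).withDensity (q ∘ T) := by
    rw [stdGauss, ← withDensity_mul _ hJ (hq.comp hT)]
    congr with z
    rw [Pi.mul_apply, Function.comp_apply, ← ENNReal.ofReal_mul (lazyJacobian_pos hr hU hτ _).le,
      ← gaussD_eq_lazyJacobian_mul hr hU hτ]
  have hvol : Measure.map T (volume.withDensity J) = volume := by
    have h := map_withDensity_abs_det_fderiv_eq_addHaar (volume : Measure (Fin d → ℝ))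
      MeasurableSet.univ.nullMeasurableSet
      (fun z _ => (hasFDerivAt_lazyMap hr (hτ.1.differentiable one_ne_zero _)).hasFDerivWithinAt)
      (lazyMap_leftInverse hr hU hτ.2.2.1).injective.injOn
    rwa [Measure.restrict_univ, Set.image_univ,
      (lazyMap_rightInverse hr hU hτ.2.2.2).surjective.range_eq, Measure.restrict_univ] at h
  calc Measure.map T (stdGauss d)
      = Measure.map T ((volume.withDensity J).withDensity (q ∘ T)) := by rw [← hρ]
    _ = volume.withDensity q := by rw [map_withDensity_comp _ hT hq, hvol]
    _ = _ := withDensity_mul_gaussD hg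

end Pushforward

/-- Pythagorean identity for the KL projection onto lazy maps, where
`T⋆ ∈ 𝒯_r(U)` pushes `ρ` forward to the density `f⋆(U_rᵀ x) ρ(x)`, with
`f⋆ = E[π/ρ | U_rᵀ X]`, `X ∼ ρ`. In particular `T⋆` is a KL minimizer. -/
theorem kl_pythagorean {d r : ℕ} (hr : r ≤ d)
    (U : Matrix (Fin d) (Fin d) ℝ) (hU : U * Uᵀ = 1)
    (πm : Measure (Fin d → ℝ)) [IsProbabilityMeasure πm] (hac : πm ≪ volume)
    (fstar : (Fin r → ℝ) → ℝ)
    (hfstar : (fun x => fstar ((colsFirst r hr U)ᵀ.mulVec x)) =ᵐ[stdGauss d]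
      MeasureTheory.condExp
        (MeasurableSpace.comap (fun x => (colsFirst r hr U)ᵀ.mulVec x) (by infer_instance))
        (stdGauss d) (fun x => (πm.rnDeriv (stdGauss d) x).toReal))
    (τs σs : (Fin r → ℝ) → (Fin r → ℝ)) (hτs : IsDiffeo τs σs)
    (hTstar : Measure.map (lazyMap hr U τs) (stdGauss d) =
      volume.withDensity
        (fun x => ENNReal.ofReal (fstar ((colsFirst r hr U)ᵀ.mulVec x) * gaussD d x)))
    (hfin : ∀ τ σ : (Fin r → ℝ) → (Fin r → ℝ), IsDiffeo τ σ →
      klDiv πm (Measure.map (lazyMap hr U τ) (stdGauss d)) ≠ ⊤) :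
    ∀ τ σ : (Fin r → ℝ) → (Fin r → ℝ), IsDiffeo τ σ →
      klDiv πm (Measure.map (lazyMap hr U τ) (stdGauss d)) =
        klDiv πm (Measure.map (lazyMap hr U τs) (stdGauss d)) +
        klDiv (Measure.map (lazyMap hr U τs) (stdGauss d))
              (Measure.map (lazyMap hr U τ) (stdGauss d)) ∧
      klDiv πm (Measure.map (lazyMap hr U τs) (stdGauss d)) ≤
        klDiv πm (Measure.map (lazyMap hr U τ) (stdGauss d)) := by
  intro τ σ hτ
  set proj := fun x : Fin d → ℝ => (colsFirst r hr U)ᵀ *ᵥ x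
  have hm : MeasurableSpace.comap proj inferInstance ≤ MeasurableSpace.pi :=
    (continuous_const.matrix_mulVec continuous_id).measurable.comap_le
  have hπρ : πm ≪ stdGauss d := hac.trans (volume_absolutelyContinuous_stdGauss d)
  have hTstar_eq : Measure.map (lazyMap hr U τs) (stdGauss d) =
      condProj (MeasurableSpace.comap proj inferInstance) (stdGauss d) πm := by
    rw [hTstar, condProj, ← withDensity_mul_gaussD (measurable_condExp_rnDeriv hm)]
    refine withDensity_congr_ae ?_
    filter_upwards [(volume_absolutelyContinuous_stdGauss d).ae_le hfstar] with x hx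
    rw [hx]
  have hg : StronglyMeasurable[MeasurableSpace.comap proj inferInstance]
      fun x => lazyDensity hr U τ σ (proj x) :=
    ((measurable_lazyDensity hr hτ.2.1.continuous.measurable).comp
      (comap_measurable proj)).stronglyMeasurable
  have : IsProbabilityMeasure (Measure.map (lazyMap hr U τ) (stdGauss d)) :=
    Measure.isProbabilityMeasure_map (continuous_lazyMap hr hτ.1.continuous).aemeasurable
  have hpyth := klDiv_eq_klDiv_condProj_add hm hπρ hg
    (ae_of_all _ fun x => lazyDensity_pos hr hU hτ (proj x)) (map_lazyMap_stdGauss hr hU hτ)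
    (hfin τ σ hτ) (hTstar_eq ▸ hfin τs σs hτs)
  rw [hTstar_eq]
  exact ⟨hpyth, hpyth ▸ le_self_add⟩
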